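/- arXiv:1611.08687 — 4 statements merged into one kernel-verified Lean document; each statement's English description precedes it below -/
import Mathlib

section
/- Let T be a tree, v a leaf of T with neighbor w, and k ≥ 1 the number of external influencers. Let T' = T - {v} with thresholds unchanged, and T'' = T - {v} with the threshold of w reduced by 1 (and all other thresholds unchanged). Then T has a pervading link set if and only if either (a) t(v) ≤ k and T'' has a pervading link set, or (b) t(v) = k+1 and T' has a pervading link set. -/
open Finset
open scoped Classical

/-- Threshold activation process: `act G t s j` is the set of nodes active at step `j`,
given link vector `s` (partial incentives from external influencers). -/
noncomputable def act {V : Type*} [Fintype V] (G : SimpleGraph V) (t s : V → ℕ) :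
    ℕ → Finset V
  | 0 => Finset.univ.filter (fun v => t v ≤ s v)
  | (j+1) => act G t s j ∪ Finset.univ.filter
      (fun v => t v ≤ s v + ((act G t s j).filter (fun u => G.Adj u v)).card)

/-- A link vector `s` is pervading for `(G, t)` with `k` external influencers if each node
receives at most `k` links and the process eventually activates every node. -/
def Pervading {V : Type*} [Fintype V] (G : SimpleGraph V) (t s : V → ℕ) (k : ℕ) : Prop :=
  (∀ v, s v ≤ k) ∧ ∃ j, act G t s j = Finset.univ

/-!
The nodes eventually activated form the least set `A` that is closed under the activation rule
(every node `u` with `t u ≤ s u + #(neighbours of u in A)` lies in `A`), so a link vector is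
pervading iff `univ` is the only closed set. Closed sets of `T` and of `T - {v}` correspond by
adding or removing the leaf `v`, which only changes the neighbour count at `w`, by one.

If `s` pervades `T`, then `t v ≤ s v + 1 ≤ k + 1` since `v` has one neighbour. When `t v ≤ k`
the node `v` may be seeded directly, and an active `v` is exactly a unit of threshold taken off
`w`: this is `T''`. When `t v = k + 1` the node `v` must wait for `w` and never helps it, which
is `T'`.
-/

def Pervades {V : Type*} [Fintype V] (G : SimpleGraph V) (t s : V → ℕ) : Prop :=
  ∃ j, act G t s j = univ

noncomputable def adjCount {V : Type*} (G : SimpleGraph V) (A : Finset V) (u : V) : ℕ :=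
  #{x ∈ A | G.Adj x u}

def ActivationClosed {V : Type*} (G : SimpleGraph V) (t s : V → ℕ) (A : Finset V) : Prop :=
  ∀ u, t u ≤ s u + adjCount G A u → u ∈ A

lemma adjCount_mono {V : Type*} {G : SimpleGraph V} {A B : Finset V} (h : A ⊆ B) (u : V) :
    adjCount G A u ≤ adjCount G B u :=
  card_le_card (filter_subset_filter _ h)

section Activation

variable {V : Type*} [Fintype V] {G : SimpleGraph V} {t s : V → ℕ}

lemma pervading_iff {k : ℕ} : Pervading G t s k ↔ (∀ u, s u ≤ k) ∧ Pervades G t s := Iff.rfl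

lemma mem_act_succ {j : ℕ} {u : V} :
    u ∈ act G t s (j + 1) ↔ u ∈ act G t s j ∨ t u ≤ s u + adjCount G (act G t s j) u := by
  simp [act, adjCount]

lemma act_monotone : Monotone (act G t s) :=
  monotone_nat_of_le_succ fun _ _ hu => mem_act_succ.2 (.inl hu)

lemma act_subset_of_activationClosed {A : Finset V} (hA : ActivationClosed G t s A) (j : ℕ) :
    act G t s j ⊆ A := by
  induction j with
  | zero => exact fun u hu => hA u (by simp [act] at hu; omega)
  | succ j ih =>
    intro u hu
    rcases mem_act_succ.1 hu with hu | hu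
    · exact ih hu
    · exact hA u (hu.trans (by grw [adjCount_mono ih]))

lemma activationClosed_act_of_act_succ_eq {N : ℕ} (hN : act G t s (N + 1) = act G t s N) :
    ActivationClosed G t s (act G t s N) :=
  fun _ hu => hN ▸ mem_act_succ.2 (.inr hu)

theorem pervades_iff_forall_activationClosed :
    Pervades G t s ↔ ∀ A, ActivationClosed G t s A → A = univ := by
  constructor
  · rintro ⟨j, hj⟩ A hA
    exact eq_univ_of_forall fun u => act_subset_of_activationClosed hA j (hj ▸ mem_univ u)
  · intro h
    obtain ⟨N, hN⟩ := WellFoundedGT.monotone_chain_condition ⟨act G t s, act_monotone⟩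
    exact ⟨N, h _ (activationClosed_act_of_act_succ_eq (hN (N + 1) N.le_succ).symm)⟩

lemma activationClosed_univ_erase {u : V} (hu : s u + G.degree u < t u) :
    ActivationClosed G t s (univ.erase u) := by
  intro x hx
  refine mem_erase.2 ⟨fun hxu => ?_, mem_univ x⟩
  subst hxu
  have : adjCount G (univ.erase x) x ≤ G.degree x := by
    rw [← G.card_neighborFinset_eq_degree, G.neighborFinset_eq_filter]
    exact card_le_card fun y => by simp [G.adj_comm]
  omega

lemma Pervades.le_add_degree (h : Pervades G t s) (u : V) : t u ≤ s u + G.degree u := by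
  by_contra! hu
  have := (pervades_iff_forall_activationClosed.1 h _ (activationClosed_univ_erase hu)).ge
  exact notMem_erase u univ (this (mem_univ u))

end Activation

section DeleteVertex

variable {V : Type*} {G : SimpleGraph V} {v w : V} {t s : V → ℕ}

lemma adj_iff_eq_of_degree_eq_one [Fintype (G.neighborSet v)] (hv : G.degree v = 1)
    (hvw : G.Adj v w) {u : V} : G.Adj v u ↔ u = w := by
  obtain ⟨w', -, hw'⟩ := SimpleGraph.degree_eq_one_iff_existsUnique_adj.1 hv
  exact ⟨fun hu => (hw' u hu).trans (hw' w hvw).symm, fun hu => hu ▸ hvw⟩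

lemma exists_extend_of_le {k c : ℕ} (s' : {x // x ≠ v} → ℕ) (hs' : ∀ u, s' u ≤ k) (hc : c ≤ k) :
    ∃ s : V → ℕ, (∀ x, s x ≤ k) ∧ s v = c ∧ (fun u : {x // x ≠ v} => s u) = s' := by
  refine ⟨fun x => if h : x = v then c else s' ⟨x, h⟩, fun x => ?_, by simp,
    funext fun u => by simp [u.2]⟩
  by_cases hx : x = v <;> simp [hx, hc, hs']

lemma adjCount_eq_adjCount_comap {A : Finset V} {A' : Finset {x // x ≠ v}}
    (hA : ∀ x : {x // x ≠ v}, x ∈ A' ↔ ↑x ∈ A) (u : {x // x ≠ v}) :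
    adjCount G A u =
      adjCount (G.comap Subtype.val) A' u + if v ∈ A ∧ G.Adj v u then 1 else 0 := by
  rw [adjCount, ← card_filter_add_card_filter_not (s := {x ∈ A | G.Adj x u}) (· ≠ v)]
  congr 1
  · rw [adjCount, ← card_map (Function.Embedding.subtype _)]
    congr 1
    ext x
    simp [hA]
  · rw [filter_filter]
    split_ifs with h
    · exact card_eq_one.2 ⟨v, by ext x; simp only [mem_filter, mem_singleton]; grind⟩
    · exact card_eq_zero.2 (filter_eq_empty_iff.2 (by grind))

lemma adjCount_eq_ite_of_adj_iff_eq (hv : ∀ u, G.Adj v u ↔ u = w) (A : Finset V) :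
    adjCount G A v = if w ∈ A then 1 else 0 := by
  simp only [adjCount, G.adj_comm _ v, hv]
  split_ifs with hw
  · exact card_eq_one.2 ⟨w, by ext; simp only [mem_filter, mem_singleton]; grind⟩
  · exact card_eq_zero.2 (filter_eq_empty_iff.2 (by grind))

lemma activationClosed_map_of_notMem (hv : ∀ u, G.Adj v u ↔ u = w) (hvt : s v < t v)
    {A' : Finset {x // x ≠ v}} (hw : w ∉ A'.map (Function.Embedding.subtype _))
    (hA' : ActivationClosed (G.comap Subtype.val) (fun u => t u.val) (fun u => s u) A') :
    ActivationClosed G t s (A'.map (Function.Embedding.subtype _)) := by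
  intro u hu
  by_cases huv : u = v
  · subst huv
    rw [adjCount_eq_ite_of_adj_iff_eq hv, if_neg hw] at hu
    omega
  rw [adjCount_eq_adjCount_comap (A' := A') (fun x => by simp [x.2]) ⟨u, huv⟩] at hu
  exact mem_map_of_mem _ (hA' ⟨u, huv⟩ (by simpa using hu))

variable [DecidableEq V]

lemma activationClosed_comap_subtype {A : Finset V} (hA : ActivationClosed G t s A) :
    ActivationClosed (G.comap (Subtype.val : {x // x ≠ v} → V)) (fun u => t u) (fun u => s u)
      (A.subtype (· ≠ v)) := by
  intro u hu
  rw [mem_subtype]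
  apply hA
  rw [adjCount_eq_adjCount_comap fun _ => mem_subtype]
  dsimp only at hu
  omega

lemma activationClosed_insert_map_of_mem (hv : ∀ u, G.Adj v u ↔ u = w)
    {A' : Finset {x // x ≠ v}} (hw : w ∈ A'.map (Function.Embedding.subtype _))
    (hA' : ActivationClosed (G.comap Subtype.val) (fun u => t u.val) (fun u => s u) A') :
    ActivationClosed G t s (insert v (A'.map (Function.Embedding.subtype _))) := by
  intro u hu
  by_cases huv : u = v
  · simp [huv]
  rw [adjCount_eq_adjCount_comap (A' := A') (fun x => by simp [x.2]) ⟨u, huv⟩] at hu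
  refine mem_insert_of_mem ?_
  rcases eq_or_ne u w with rfl | huw
  · exact hw
  · exact mem_map_of_mem _ (hA' ⟨u, huv⟩ (by simpa [hv, huw] using hu))

lemma activationClosed_insert_map_of_lowered (hv : ∀ u, G.Adj v u ↔ u = w)
    {A' : Finset {x // x ≠ v}}
    (hA' : ActivationClosed (G.comap Subtype.val)
      (fun u => if u.val = w then t w - 1 else t u.val) (fun u => s u) A') :
    ActivationClosed G t s (insert v (A'.map (Function.Embedding.subtype _))) := by
  intro u hu
  by_cases huv : u = v
  · simp [huv]
  rw [adjCount_eq_adjCount_comap (A' := A') (fun x => by simp [x.2]) ⟨u, huv⟩] at hu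
  refine mem_insert_of_mem (mem_map_of_mem _ (hA' ⟨u, huv⟩ ?_))
  rcases eq_or_ne u w with rfl | huw
  · simp only [mem_insert_self, true_and, hv, if_true] at hu ⊢
    omega
  · simp only [hv, huw, and_false, if_false] at hu ⊢
    omega

lemma activationClosed_subtype_lowered (hv : ∀ u, G.Adj v u ↔ u = w)
    {A : Finset V} (hA : ActivationClosed G t s A) (hvA : v ∈ A) :
    ActivationClosed (G.comap Subtype.val) (fun u => if u.val = w then t w - 1 else t u.val)
      (fun u => s u) (A.subtype (· ≠ v)) := by
  intro u hu
  rw [mem_subtype]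
  apply hA
  rw [adjCount_eq_adjCount_comap fun _ => mem_subtype]
  rcases eq_or_ne u.val w with huw | huw
  · simp only [huw, if_true, hvA, hv, true_and] at hu ⊢
    omega
  · simpa [huw, hv] using hu

variable [Fintype V]

lemma eq_univ_of_insert_map_eq_univ {A' : Finset {x // x ≠ v}}
    (h : insert v (A'.map (Function.Embedding.subtype _)) = univ) : A' = univ :=
  eq_univ_of_forall fun x => by simpa [x.2] using h.ge (mem_univ x.val)

lemma eq_univ_of_subtype_eq_univ {A : Finset V} (h : A.subtype (· ≠ v) = univ) (hv : v ∈ A) :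
    A = univ := by
  refine eq_univ_of_forall fun x => ?_
  by_cases hx : x = v
  · exact hx ▸ hv
  · simpa using h.ge (mem_univ ⟨x, hx⟩)

lemma Pervades.comap (hv : ∀ u, G.Adj v u ↔ u = w) (hvt : s v < t v) (h : Pervades G t s) :
    Pervades (G.comap (Subtype.val : {x // x ≠ v} → V)) (fun u => t u) (fun u => s u) := by
  rw [pervades_iff_forall_activationClosed] at h ⊢
  intro A' hA'
  by_cases hw : w ∈ A'.map (Function.Embedding.subtype _)
  · exact eq_univ_of_insert_map_eq_univ (h _ (activationClosed_insert_map_of_mem hv hw hA'))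
  · refine eq_univ_of_insert_map_eq_univ ?_
    rw [h _ (activationClosed_map_of_notMem hv hvt hw hA')]
    exact insert_eq_of_mem (mem_univ v)

lemma Pervades.of_comap_of_adj (hvw : G.Adj v w) (hvt : t v ≤ s v + 1)
    (h : Pervades (G.comap (Subtype.val : {x // x ≠ v} → V)) (fun u => t u) (fun u => s u)) :
    Pervades G t s := by
  rw [pervades_iff_forall_activationClosed] at h ⊢
  intro A hA
  have hA' := h _ (activationClosed_comap_subtype hA)
  have hwA : w ∈ A := by simpa using hA'.ge (mem_univ ⟨w, hvw.ne.symm⟩)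
  have : 0 < adjCount G A v := card_pos.2 ⟨w, mem_filter.2 ⟨hwA, hvw.symm⟩⟩
  exact eq_univ_of_subtype_eq_univ hA' (hA v (by omega))

lemma Pervades.comap_lowered (hv : ∀ u, G.Adj v u ↔ u = w) (h : Pervades G t s) :
    Pervades (G.comap (Subtype.val : {x // x ≠ v} → V))
      (fun u => if u.val = w then t w - 1 else t u.val) (fun u => s u) := by
  rw [pervades_iff_forall_activationClosed] at h ⊢
  exact fun A' hA' =>
    eq_univ_of_insert_map_eq_univ (h _ (activationClosed_insert_map_of_lowered hv hA'))

lemma Pervades.of_comap_lowered (hv : ∀ u, G.Adj v u ↔ u = w) (hvt : t v ≤ s v)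
    (h : Pervades (G.comap (Subtype.val : {x // x ≠ v} → V))
      (fun u => if u.val = w then t w - 1 else t u.val) (fun u => s u)) :
    Pervades G t s := by
  rw [pervades_iff_forall_activationClosed] at h ⊢
  intro A hA
  have hvA : v ∈ A := hA v (by omega)
  exact eq_univ_of_subtype_eq_univ (h _ (activationClosed_subtype_lowered hv hA hvA)) hvA

end DeleteVertex

theorem tree_pervading_leaf_iff_general {V : Type*} [Fintype V] [DecidableEq V]
    (G : SimpleGraph V) (t : V → ℕ) (k : ℕ)
    (v w : V) (hleaf : G.degree v = 1) (hadj : G.Adj v w) :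
    (∃ s, Pervading G t s k) ↔
      ((t v ≤ k ∧ ∃ s, Pervading (G.comap (Subtype.val : {u : V // u ≠ v} → V))
          (fun u => if u.val = w then t w - 1 else t u.val) s k)
       ∨ (t v = k + 1 ∧ ∃ s, Pervading (G.comap (Subtype.val : {u : V // u ≠ v} → V))
          (fun u => t u.val) s k)) := by
  have hv : ∀ u, G.Adj v u ↔ u = w := fun _ => adj_iff_eq_of_degree_eq_one hleaf hadj
  simp only [pervading_iff]
  constructor
  · rintro ⟨s, hsk, hs⟩
    have hvt : t v ≤ s v + 1 := hleaf ▸ hs.le_add_degree v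
    have hsv := hsk v
    by_cases htv : t v ≤ k
    · exact .inl ⟨htv, _, fun u => hsk u, hs.comap_lowered hv⟩
    · exact .inr ⟨by omega, _, fun u => hsk u, hs.comap hv (by omega)⟩
  · rintro (⟨htv, s', hs'k, hs'⟩ | ⟨htv, s', hs'k, hs'⟩)
    · obtain ⟨s, hsk, hsv, rfl⟩ := exists_extend_of_le s' hs'k htv
      exact ⟨s, hsk, hs'.of_comap_lowered hv hsv.ge⟩
    · obtain ⟨s, hsk, hsv, rfl⟩ := exists_extend_of_le s' hs'k le_rfl
      exact ⟨s, hsk, hs'.of_comap_of_adj hadj (by omega)⟩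

theorem tree_pervading_leaf_iff {V : Type*} [Fintype V] [DecidableEq V]
    (G : SimpleGraph V) (hT : G.IsTree) (t : V → ℕ) (k : ℕ) (hk : 1 ≤ k)
    (ht : ∀ u, 1 ≤ t u)
    (v w : V) (hleaf : G.degree v = 1) (hadj : G.Adj v w) :
    (∃ s, Pervading G t s k) ↔
      ((t v ≤ k ∧ ∃ s, Pervading (G.comap (Subtype.val : {u : V // u ≠ v} → V))
          (fun u => if u.val = w then t w - 1 else t u.val) s k)
       ∨ (t v = k + 1 ∧ ∃ s, Pervading (G.comap (Subtype.val : {u : V // u ≠ v} → V))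
          (fun u => t u.val) s k)) :=
  tree_pervading_leaf_iff_general G t k v w hleaf hadj
end

section
/- Let K_n be the complete graph on nodes {1,...,n} with thresholds sorted so that t(i) ≤ t(i+1) for all 1 ≤ i < n. Then K_n has a pervading link set with k external influencers if and only if t(i) ≤ i + k - 1 for all 1 ≤ i ≤ n. -/
open Finset
open scoped Classical

lemma act_mono {V : Type*} [Fintype V] (G : SimpleGraph V) (t s : V → ℕ) :
    Monotone (act G t s) :=
  monotone_nat_of_le_succ fun _ => Finset.subset_union_left

theorem clique_pervading_iff (n k : ℕ) (t : Fin n → ℕ) (hmono : Monotone t) :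
    (∃ s, Pervading (⊤ : SimpleGraph (Fin n)) t s k) ↔
      ∀ i : Fin n, t i ≤ i.val + k := by
  constructor
  · rintro ⟨s, hsk, j, hj⟩
    by_contra h
    push_neg at h
    obtain ⟨i, hi⟩ := h
    have key : ∀ m, ∀ v ∈ act (⊤ : SimpleGraph (Fin n)) t s m, v < i := by
      intro m
      induction m with
      | zero =>
        intro v hv
        simp only [act, Finset.mem_filter, Finset.mem_univ, true_and] at hv
        by_contra hvi
        push_neg at hvi
        have hti : t i ≤ t v := hmono hvi
        have := hsk v
        omega
      | succ m ih =>
        intro v hv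
        simp only [act, Finset.mem_union, Finset.mem_filter, Finset.mem_univ, true_and, Finset.filter_congr_decidable] at hv
        by_contra hvi
        push_neg at hvi
        have hti : t i ≤ t v := hmono hvi
        rcases hv with hv | hv
        · exact absurd (ih v hv) (not_lt.2 hvi)
        · have hsub : act (⊤ : SimpleGraph (Fin n)) t s m ⊆ Finset.Iio i :=
            fun u hu => Finset.mem_Iio.2 (ih u hu)
          have h2 : t v ≤ s v + i.val := by
            refine hv.trans (Nat.add_le_add_left (le_trans (Finset.card_le_card ?_)
              ((Finset.card_le_card hsub).trans_eq (Fin.card_Iio i))) _)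
            intro u hu
            simp only [Finset.mem_filter] at hu
            exact hu.1
          have := hsk v
          omega
    have hiu : i ∈ act (⊤ : SimpleGraph (Fin n)) t s j := hj ▸ Finset.mem_univ i
    exact lt_irrefl i (key j i hiu)
  · intro h
    refine ⟨fun v => min (t v) k, fun v => min_le_right _ _, n, ?_⟩
    set s : Fin n → ℕ := fun v => min (t v) k with hs
    have key : ∀ m, ∀ i : Fin n, i.val ≤ m →
        i ∈ act (⊤ : SimpleGraph (Fin n)) t s m := by
      intro m
      induction m with
      | zero =>
        intro i hi
        simp only [act, Finset.mem_filter, Finset.mem_univ, true_and, hs]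
        have := h i
        omega
      | succ m ih =>
        intro i hi
        rcases Nat.lt_succ_iff_lt_or_eq.mp (Nat.lt_succ_of_le hi) with h' | h'
        · exact act_mono _ _ _ (Nat.le_succ m) (ih i (Nat.lt_succ_iff.mp h'))
        · rcases le_or_gt (t i) k with htk | htk
          · apply act_mono _ _ _ (Nat.zero_le (m+1))
            simp only [act, Finset.mem_filter, Finset.mem_univ, true_and, hs]
            omega
          · simp only [act, Finset.mem_union, Finset.mem_filter, Finset.mem_univ, true_and, Finset.filter_congr_decidable]
            right
            have hti := h i
            calc t i ≤ s i + (Finset.Iio i).card := by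
                  rw [Fin.card_Iio]; simp only [hs]; omega
              _ ≤ _ := Nat.add_le_add_left (Finset.card_le_card ?_) _
            intro u hu
            rw [Finset.mem_Iio] at hu
            simp only [Finset.mem_filter]
            refine ⟨ih u ?_, ?_⟩
            · have : u.val < i.val := hu
              omega
            · simpa using ne_of_lt hu
    exact Finset.eq_univ_iff_forall.2 fun i => key n i (le_of_lt i.isLt)
end

section
/- Let C_n be a cycle with k influencers containing two consecutive nodes i, j of threshold k+2 such that every node strictly between i and j (clockwise) has threshold exactly k+1. Then no link vector activates any node of the sub-path from i to j; in particular C_n has no pervading link set. -/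
open Finset
open scoped Classical

/-- The cycle graph on `ZMod n`: `i` is adjacent to `i ± 1`. -/
def cycleGraph (n : ℕ) : SimpleGraph (ZMod n) :=
  SimpleGraph.fromRel (fun i j => j = i + 1)

/-- `v` lies strictly between `i` and `j` in the clockwise direction on `ZMod n`. -/
def Between {n : ℕ} [NeZero n] (i j v : ZMod n) : Prop :=
  0 < (v - i).val ∧ (v - i).val < (j - i).val

lemma cycle_adj {n : ℕ} {u v : ZMod n} (h : (cycleGraph n).Adj u v) :
    u = v + 1 ∨ u = v - 1 := by
  obtain ⟨hne, h | h⟩ := h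
  · right; rw [h]; ring
  · left; exact h

lemma zmod_val_sub_one {n : ℕ} [NeZero n] {x : ZMod n} (hx : 0 < x.val) :
    (x - 1).val = x.val - 1 := by
  have hlt : x.val - 1 < n := lt_of_le_of_lt (Nat.sub_le _ _) (ZMod.val_lt x)
  have h1 : (x - 1) = ((x.val - 1 : ℕ) : ZMod n) := by
    rw [Nat.cast_sub hx, Nat.cast_one, ZMod.natCast_rightInverse x]
  rw [h1, ZMod.val_cast_of_lt hlt]

lemma zmod_val_add_one {n : ℕ} [NeZero n] {x : ZMod n} (hx : x.val + 1 < n) :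
    (x + 1).val = x.val + 1 := by
  have h1 : (x + 1) = ((x.val + 1 : ℕ) : ZMod n) := by
    rw [Nat.cast_add, Nat.cast_one, ZMod.natCast_rightInverse x]
  rw [h1, ZMod.val_cast_of_lt hx]

theorem cycle_consecutive_high_infeasible (n k : ℕ) [NeZero n] (hn : 3 ≤ n)
    (t : ZMod n → ℕ) (i j : ZMod n) (hij : i ≠ j)
    (hti : t i = k + 2) (htj : t j = k + 2)
    (hbet : ∀ v, Between i j v → t v = k + 1) :
    (∀ s : ZMod n → ℕ, (∀ v, s v ≤ k) →
        ∀ m (v : ZMod n), (v = i ∨ v = j ∨ Between i j v) →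
          v ∉ act (cycleGraph n) t s m) ∧
      ¬ ∃ s, Pervading (cycleGraph n) t s k := by
  have hb0 : 0 < (j - i).val := ZMod.val_pos.mpr (sub_ne_zero.mpr hij.symm)
  have hbn : (j - i).val < n := ZMod.val_lt _
  haveI : Fact (1 < n) := ⟨by omega⟩
  -- i+1 is on the path
  have hiP1 : (i + 1) = i ∨ (i + 1) = j ∨ Between i j (i + 1) := by
    have hv1 : (i + 1 - i) = (1 : ZMod n) := by ring
    have hval : (i + 1 - i).val = 1 := by rw [hv1, ZMod.val_one]
    rcases Nat.lt_or_ge 1 (j - i).val with h | h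
    · exact Or.inr (Or.inr ⟨by omega, by omega⟩)
    · have hvv : (i + 1 - i).val = (j - i).val := by omega
      have := ZMod.val_injective n hvv
      exact Or.inr (Or.inl (by linear_combination this))
  -- j-1 is on the path
  have hjP1 : (j - 1) = i ∨ (j - 1) = j ∨ Between i j (j - 1) := by
    have hv1 : (j - 1 - i) = (j - i) - 1 := by ring
    have hval : (j - 1 - i).val = (j - i).val - 1 := by rw [hv1, zmod_val_sub_one hb0]
    rcases Nat.lt_or_ge 1 (j - i).val with h | h
    · exact Or.inr (Or.inr ⟨by omega, by omega⟩)
    · have hvv : (j - 1 - i).val = 0 := by omega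
      have := (ZMod.val_eq_zero _).mp hvv
      exact Or.inl (by linear_combination this)
  -- neighbors of a between node are on the path
  have hbetP : ∀ v : ZMod n, Between i j v →
      ((v - 1) = i ∨ (v - 1) = j ∨ Between i j (v - 1)) ∧
      ((v + 1) = i ∨ (v + 1) = j ∨ Between i j (v + 1)) := by
    rintro v ⟨ha0, hab⟩
    constructor
    · have hv1 : (v - 1 - i) = (v - i) - 1 := by ring
      have hval : (v - 1 - i).val = (v - i).val - 1 := by rw [hv1, zmod_val_sub_one ha0]
      rcases Nat.lt_or_ge 1 (v - i).val with h | h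
      · exact Or.inr (Or.inr ⟨by omega, by omega⟩)
      · have hvv : (v - 1 - i).val = 0 := by omega
        have := (ZMod.val_eq_zero _).mp hvv
        exact Or.inl (by linear_combination this)
    · have hv1 : (v + 1 - i) = (v - i) + 1 := by ring
      have hval : (v + 1 - i).val = (v - i).val + 1 := by
        rw [hv1, zmod_val_add_one (by omega)]
      rcases Nat.lt_or_ge ((v - i).val + 1) (j - i).val with h | h
      · exact Or.inr (Or.inr ⟨by omega, by omega⟩)
      · have hvv : (v + 1 - i).val = (j - i).val := by omega
        have := ZMod.val_injective n hvv
        exact Or.inr (Or.inl (by linear_combination this))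
  have main : ∀ s : ZMod n → ℕ, (∀ v, s v ≤ k) →
      ∀ m (v : ZMod n), (v = i ∨ v = j ∨ Between i j v) →
        v ∉ act (cycleGraph n) t s m := by
    intro s hs m
    induction m with
    | zero =>
      intro v hv hmem
      simp only [act, Finset.mem_filter, Finset.mem_univ, true_and] at hmem
      rcases hv with h | h | hv
      · rw [h, hti] at hmem; have := hs i; omega
      · rw [h, htj] at hmem; have := hs j; omega
      · have := hbet v hv; have := hs v; omega
    | succ m ih =>
      intro v hv hmem
      simp only [act, Finset.mem_union, Finset.mem_filter, Finset.mem_univ, true_and] at hmem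
      rcases hmem with h | h
      · exact ih v hv h
      have hsv := hs v
      rcases hv with hh | hh | hv
      · -- v = i : active neighbors ⊆ {v - 1}
        have hP1 : (v + 1) = i ∨ (v + 1) = j ∨ Between i j (v + 1) := by
          rw [hh]; exact hiP1
        have hsub : ((act (cycleGraph n) t s m).filter
            (fun u => (cycleGraph n).Adj u v)) ⊆ {v - 1} := by
          intro u hu
          rw [Finset.mem_filter] at hu
          rcases cycle_adj hu.2 with h1 | h1
          · exact absurd (h1 ▸ hu.1) (ih (v + 1) hP1)
          · simpa using h1
        have hc : ((act (cycleGraph n) t s m).filter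
            (fun u => (cycleGraph n).Adj u v)).card ≤ 1 := by
          simpa using Finset.card_le_card hsub
        have hti' : t v = k + 2 := by rw [hh, hti]
        omega
      · -- v = j : active neighbors ⊆ {v + 1}
        have hP1 : (v - 1) = i ∨ (v - 1) = j ∨ Between i j (v - 1) := by
          rw [hh]; exact hjP1
        have hsub : ((act (cycleGraph n) t s m).filter
            (fun u => (cycleGraph n).Adj u v)) ⊆ {v + 1} := by
          intro u hu
          rw [Finset.mem_filter] at hu
          rcases cycle_adj hu.2 with h1 | h1
          · simpa using h1
          · exact absurd (h1 ▸ hu.1) (ih (v - 1) hP1)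
        have hc : ((act (cycleGraph n) t s m).filter
            (fun u => (cycleGraph n).Adj u v)).card ≤ 1 := by
          simpa using Finset.card_le_card hsub
        have htj' : t v = k + 2 := by rw [hh, htj]
        omega
      · -- between: no active neighbor
        obtain ⟨hm1, hp1⟩ := hbetP v hv
        have hsub : ((act (cycleGraph n) t s m).filter
            (fun u => (cycleGraph n).Adj u v)) ⊆ ∅ := by
          intro u hu
          rw [Finset.mem_filter] at hu
          rcases cycle_adj hu.2 with h1 | h1
          · exact absurd (h1 ▸ hu.1) (ih (v + 1) hp1)
          · exact absurd (h1 ▸ hu.1) (ih (v - 1) hm1)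
        have hc : ((act (cycleGraph n) t s m).filter
            (fun u => (cycleGraph n).Adj u v)).card = 0 := by
          simpa using Finset.card_le_card hsub
        have := hbet v hv
        omega
  refine ⟨main, ?_⟩
  rintro ⟨s, hs, m, hact⟩
  exact main s hs m i (Or.inl rfl) (hact ▸ Finset.mem_univ i)
end

section
/- Let K_n be a complete graph with nondecreasing thresholds and suppose there exists p with t(p) > k + p - 1, where p is minimal with this property. Then for any link vector (each node receiving at most k links), no node q with q ≥ p is ever activated. -/
open Finset
open scoped Classical

theorem clique_high_threshold_never_activated (n k : ℕ) (t : Fin n → ℕ)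
    (hmono : Monotone t) (p : Fin n) (hp : p.val + k < t p)
    (hpmin : ∀ q : Fin n, q < p → t q ≤ q.val + k) :
    ∀ s : Fin n → ℕ, (∀ v, s v ≤ k) →
      ∀ m (q : Fin n), p ≤ q → q ∉ act (⊤ : SimpleGraph (Fin n)) t s m := by
  intro s hs m
  induction m with
  | zero =>
    intro q hq hmem
    simp only [act, Finset.mem_filter, Finset.mem_univ, true_and] at hmem
    have h1 : t p ≤ t q := hmono hq
    have h2 : s q ≤ k := hs q
    omega
  | succ m ih =>
    intro q hq hmem
    simp only [act, Finset.mem_union, Finset.mem_filter, Finset.mem_univ, true_and] at hmem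
    rcases hmem with h | h
    · exact ih q hq h
    · rw [Finset.filter_congr_decidable] at h
      have hsub : ((act (⊤ : SimpleGraph (Fin n)) t s m).filter
          (fun u => (⊤ : SimpleGraph (Fin n)).Adj u q)) ⊆ Finset.Iio p := by
        intro u hu
        rw [Finset.mem_filter] at hu
        rw [Finset.mem_Iio]
        by_contra hlt
        exact ih u (le_of_not_gt hlt) hu.1
      have hcard := Finset.card_le_card hsub
      rw [Fin.card_Iio] at hcard
      have h1 : t p ≤ t q := hmono hq
      have h2 : s q ≤ k := hs q
      have h3 : t q ≤ s q + p.val := h.trans (Nat.add_le_add_left hcard _)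
      omega
end
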